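/- Let H be an n_cN × n_vN block matrix of N × N permutation matrices, with C_{ij} = Σ_{k=1}^{n_v} P_{ik} P_{jk}ᵀ for i ≠ j. If the Tanner graph of H has girth greater than 2m (m ≥ 2), then for all 1 ≤ i < j ≤ n_c, the Tanner graph of the matrix C_{ij} has girth greater than m. -/

import Mathlib

/-! Rows `(i, a)` and `(j, b)` of `H` have exactly `C_{ij} a b` common neighbours `(k, c)` in the
Tanner graph of `H`. So a multiple edge of `C_{ij}` yields a 4-cycle there, which the girth bound
excludes. Otherwise, picking a common neighbour for each edge of the Tanner graph of `C_{ij}`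
embeds its 1-subdivision into the Tanner graph of `H`: distinct edges get distinct picks because a
column of `H` meets each block row in exactly one row. Subdividing every edge once doubles the
length of each cycle, so the girth of `C_{ij}` is at least half that of `H`. -/

open Matrix

/-- The permutation matrix (over ℕ) associated with a permutation. -/
def permMatrix {N : ℕ} (σ : Equiv.Perm (Fin N)) : Matrix (Fin N) (Fin N) ℕ :=
  Matrix.of fun i j => if σ i = j then 1 else 0

/-- The Tanner graph of an ℕ-valued matrix: the bipartite simple graph on rows ⊕ columns
with an edge between row `i` and column `j` whenever `M i j ≠ 0`. -/
def tanner {α β : Type*} (M : Matrix α β ℕ) : SimpleGraph (α ⊕ β) :=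
  SimpleGraph.fromRel fun u v => ∃ i j, u = Sum.inl i ∧ v = Sum.inr j ∧ M i j ≠ 0

open Classical in
/-- The girth of the Tanner (multi)graph of an ℕ-valued matrix: an entry `≥ 2` is a
multiple edge, giving girth `2`; otherwise the girth of the Tanner simple graph
(`⊤` if there is no cycle). -/
noncomputable def matGirth {α β : Type*} (M : Matrix α β ℕ) : ℕ∞ :=
  if ∃ i j, 2 ≤ M i j then 2 else (tanner M).egirth


/-- The block matrix whose `(i, j)` block is the permutation matrix of `σ i j`. -/
def Hperm {N nc nv : ℕ} (σ : Fin nc → Fin nv → Equiv.Perm (Fin N)) :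
    Matrix (Fin nc × Fin N) (Fin nv × Fin N) ℕ :=
  Matrix.of fun p q => permMatrix (σ p.1 q.1) p.2 q.2

open Sum

namespace SimpleGraph

variable {V W : Type*} (G : SimpleGraph V)

def subdivision : SimpleGraph (V ⊕ G.edgeSet) :=
  fromRel fun x y => ∃ (v : V) (e : G.edgeSet), x = inl v ∧ y = inr e ∧ v ∈ (e : Sym2 V)

variable {G}

@[simp]
lemma subdivision_adj_inl_inr {v : V} {e : G.edgeSet} :
    G.subdivision.Adj (inl v) (inr e) ↔ v ∈ (e : Sym2 V) := by
  simp [subdivision]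

@[simp]
lemma subdivision_adj_inr_inl {v : V} {e : G.edgeSet} :
    G.subdivision.Adj (inr e) (inl v) ↔ v ∈ (e : Sym2 V) := by
  rw [adj_comm, subdivision_adj_inl_inr]

@[simp]
lemma not_subdivision_adj_inl_inl {v w : V} : ¬ G.subdivision.Adj (inl v) (inl w) := by
  simp [subdivision]

@[simp]
lemma not_subdivision_adj_inr_inr {e f : G.edgeSet} : ¬ G.subdivision.Adj (inr e) (inr f) := by
  simp [subdivision]

namespace Walk

def subdivide : ∀ {u v : V}, G.Walk u v → G.subdivision.Walk (inl u) (inl v)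
  | _, _, nil => nil
  | _, _, cons h p =>
      cons (subdivision_adj_inl_inr.mpr (Sym2.mem_mk_left _ _) : G.subdivision.Adj _ (inr ⟨_, h⟩))
        (cons (subdivision_adj_inr_inl.mpr (Sym2.mem_mk_right _ _)) p.subdivide)

@[simp]
lemma length_subdivide {u v : V} (p : G.Walk u v) : p.subdivide.length = 2 * p.length := by
  induction p with
  | nil => rfl
  | cons _ _ ih => simp only [subdivide, length_cons, ih]; ring

@[simp]
lemma inl_mem_support_subdivide {u v w : V} (p : G.Walk u v) :
    inl w ∈ p.subdivide.support ↔ w ∈ p.support := by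
  induction p with
  | nil => simp [subdivide]
  | cons _ _ ih => simp [subdivide, ih]

@[simp]
lemma inr_mem_support_subdivide {u v : V} (p : G.Walk u v) {e : G.edgeSet} :
    inr e ∈ p.subdivide.support ↔ (e : Sym2 V) ∈ p.edges := by
  induction p with
  | nil => simp [subdivide]
  | cons _ _ ih => simp [subdivide, ih, Subtype.ext_iff, eq_comm]

lemma IsPath.subdivide {u v : V} {p : G.Walk u v} (hp : p.IsPath) : p.subdivide.IsPath := by
  induction p with
  | nil => exact IsPath.nil
  | cons h p ih =>
    rw [cons_isPath_iff] at hp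
    simp only [Walk.subdivide, cons_isPath_iff, support_cons, List.mem_cons, reduceCtorEq,
      false_or, inl_mem_support_subdivide, inr_mem_support_subdivide]
    exact ⟨⟨ih hp.1, fun he => hp.2 (p.fst_mem_support_of_mem_edges he)⟩, hp.2⟩

lemma IsCycle.subdivide {u : V} {p : G.Walk u u} (hp : p.IsCycle) : p.subdivide.IsCycle := by
  cases p with
  | nil => exact absurd rfl hp.ne_nil
  | cons h p =>
    rw [cons_isCycle_iff] at hp
    obtain ⟨hpath, hedge⟩ := hp
    have hmid : inr ⟨s(u, _), h⟩ ∉ p.subdivide.support := by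
      rwa [inr_mem_support_subdivide]
    simp only [Walk.subdivide, cons_isCycle_iff, cons_isPath_iff, edges_cons, List.mem_cons]
    refine ⟨⟨hpath.subdivide, hmid⟩, ?_⟩
    rintro (he | he)
    · simp [h.ne] at he
    · exact hmid (p.subdivide.snd_mem_support_of_mem_edges he)

end Walk

lemma egirth_subdivision_le : G.subdivision.egirth ≤ 2 * G.egirth := by
  by_cases hG : G.IsAcyclic
  · simp [hG.egirth_eq_top]
  obtain ⟨a, w, hw, hlen⟩ := exists_egirth_eq_length.mpr hG
  rw [hlen]
  exact_mod_cast egirth_le_length hw.subdivide |>.trans_eq (by simp)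

lemma subdivision_isContained {H : SimpleGraph W} {f : V → W} (hf : f.Injective)
    {mid : G.edgeSet → W} (hmid : mid.Injective) (hdisj : ∀ v e, f v ≠ mid e)
    (hadj : ∀ (e : G.edgeSet), ∀ v ∈ (e : Sym2 V), H.Adj (f v) (mid e)) :
    G.subdivision ⊑ H := by
  refine ⟨Hom.toCopy ⟨Sum.elim f mid, ?_⟩ (hf.sumElim hmid hdisj)⟩
  rintro (v | e) (w | e') hadj'
  · simp at hadj'
  · exact hadj e' v (subdivision_adj_inl_inr.mp hadj')
  · exact (hadj e w (subdivision_adj_inr_inl.mp hadj')).symm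
  · simp at hadj'

lemma egirth_le_four {u v x y : V} (huv : u ≠ v) (hxy : x ≠ y) (hux : G.Adj u x)
    (hxv : G.Adj x v) (hvy : G.Adj v y) (hyu : G.Adj y u) : G.egirth ≤ 4 := by
  have hcycle : (Walk.cons hux (.cons hxv (.cons hvy (.cons hyu .nil)))).IsCycle := by
    simp [Walk.cons_isCycle_iff, huv, hxy, hux.ne, hxv.ne, hvy.ne, hyu.ne, hux.ne.symm,
      hyu.ne.symm, huv.symm]
  exact egirth_le_length hcycle

end SimpleGraph

open SimpleGraph

section Tanner

variable {α β : Type*} {M : Matrix α β ℕ}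

@[simp]
lemma tanner_adj_inl_inr {a : α} {b : β} : (tanner M).Adj (inl a) (inr b) ↔ M a b ≠ 0 := by
  simp [tanner]

@[simp]
lemma tanner_adj_inr_inl {a : α} {b : β} : (tanner M).Adj (inr b) (inl a) ↔ M a b ≠ 0 := by
  rw [adj_comm, tanner_adj_inl_inr]

lemma exists_eq_of_mem_edgeSet_tanner {e : Sym2 (α ⊕ β)} (he : e ∈ (tanner M).edgeSet) :
    ∃ a b, e = s(inl a, inr b) ∧ M a b ≠ 0 := by
  induction e using Sym2.ind with
  | h u v =>
    rcases u with a | b <;> rcases v with a' | b'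
    · simp [tanner] at he
    · exact ⟨a, b', rfl, by simpa using he⟩
    · exact ⟨a', b, Sym2.eq_swap, by simpa using (tanner M).adj_symm he⟩
    · simp [tanner] at he

end Tanner

section Permutation

open Finset

variable {N : ℕ}

lemma permMatrix_mul_transpose_apply (τ ρ : Equiv.Perm (Fin N)) (a b : Fin N) :
    (permMatrix τ * (permMatrix ρ)ᵀ) a b = if τ a = ρ b then 1 else 0 := by
  simp [permMatrix, Matrix.mul_apply, eq_comm]

lemma sum_permMatrix_mul_transpose_apply {ι : Type*} [Fintype ι] (τ ρ : ι → Equiv.Perm (Fin N))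
    (a b : Fin N) :
    (∑ k, permMatrix (τ k) * (permMatrix (ρ k))ᵀ) a b = #{k | τ k a = ρ k b} := by
  simp [Matrix.sum_apply, permMatrix_mul_transpose_apply]

end Permutation

section Hperm

open Finset

variable {N nc nv : ℕ} (σ : Fin nc → Fin nv → Equiv.Perm (Fin N))

/-- The block `C_{ij}` of `H Hᵀ`. -/
def gramBlock (i j : Fin nc) : Matrix (Fin N) (Fin N) ℕ :=
  ∑ k, permMatrix (σ i k) * (permMatrix (σ j k))ᵀ

lemma gramBlock_apply (i j : Fin nc) (a b : Fin N) :
    gramBlock σ i j a b = #{k | σ i k a = σ j k b} :=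
  sum_permMatrix_mul_transpose_apply _ _ a b

lemma gramBlock_ne_zero_iff {i j : Fin nc} {a b : Fin N} :
    gramBlock σ i j a b ≠ 0 ↔ ∃ k, σ i k a = σ j k b := by
  simp [gramBlock_apply, filter_eq_empty_iff]

@[simp]
lemma Hperm_eq_zero_iff {p : Fin nc × Fin N} {q : Fin nv × Fin N} :
    Hperm σ p q = 0 ↔ σ p.1 q.1 p.2 ≠ q.2 := by
  simp [Hperm, permMatrix]

lemma eq_of_tanner_Hperm_adj {i : Fin nc} {a a' : Fin N} {q : Fin nv × Fin N}
    (h : (tanner (Hperm σ)).Adj (inl (i, a)) (inr q))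
    (h' : (tanner (Hperm σ)).Adj (inl (i, a')) (inr q)) : a = a' :=
  (σ i q.1).injective <| by
    simp only [tanner_adj_inl_inr, Ne, Hperm_eq_zero_iff, not_not] at h h'
    rw [h, h']

def blockRows (i j : Fin nc) : Fin N ⊕ Fin N → (Fin nc × Fin N) ⊕ (Fin nv × Fin N) :=
  Sum.elim (fun a => inl (i, a)) (fun b => inl (j, b))

lemma blockRows_injective {i j : Fin nc} (hij : i ≠ j) :
    (blockRows (N := N) (nv := nv) i j).Injective :=
  Function.Injective.sumElim (fun _ _ h => by simpa using h) (fun _ _ h => by simpa using h)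
    (fun _ _ h => hij (Prod.ext_iff.mp (inl_injective h)).1)

lemma exists_common_column {i j : Fin nc} {e : Sym2 (Fin N ⊕ Fin N)}
    (he : e ∈ (tanner (gramBlock σ i j)).edgeSet) :
    ∃ q : Fin nv × Fin N, ∀ v ∈ e, (tanner (Hperm σ)).Adj (blockRows i j v) (inr q) := by
  obtain ⟨a, b, rfl, hab⟩ := exists_eq_of_mem_edgeSet_tanner he
  obtain ⟨k, hk⟩ := (gramBlock_ne_zero_iff σ).mp hab
  refine ⟨(k, σ i k a), fun v hv => ?_⟩
  rcases Sym2.mem_iff.mp hv with rfl | rfl <;> simp [blockRows, hk]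

lemma subdivision_tanner_gramBlock_isContained {i j : Fin nc} (hij : i ≠ j) :
    (tanner (gramBlock σ i j)).subdivision ⊑ tanner (Hperm σ) := by
  choose q hq using fun e : (tanner (gramBlock σ i j)).edgeSet => exists_common_column σ e.2
  refine subdivision_isContained (blockRows_injective hij) (mid := inr ∘ q) ?_
    (fun v e => by cases v <;> simp [blockRows]) hq
  intro e e' hee'
  obtain ⟨a, b, he, -⟩ := exists_eq_of_mem_edgeSet_tanner e.2
  obtain ⟨a', b', he', -⟩ := exists_eq_of_mem_edgeSet_tanner e'.2
  have hq' : ∀ v ∈ (e' : Sym2 _), (tanner (Hperm σ)).Adj (blockRows i j v) (inr (q e)) := by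
    rw [inr_injective hee']
    exact hq e'
  have ha : a = a' := eq_of_tanner_Hperm_adj σ (hq e (inl a) (he ▸ Sym2.mem_mk_left _ _))
    (hq' (inl a') (he' ▸ Sym2.mem_mk_left _ _))
  have hb : b = b' := eq_of_tanner_Hperm_adj σ (hq e (inr b) (he ▸ Sym2.mem_mk_right _ _))
    (hq' (inr b') (he' ▸ Sym2.mem_mk_right _ _))
  exact Subtype.ext (by rw [he, he', ha, hb])

lemma egirth_tanner_Hperm_le_four {i j : Fin nc} (hij : i ≠ j) {a b : Fin N}
    (hab : 2 ≤ gramBlock σ i j a b) : (tanner (Hperm σ)).egirth ≤ 4 := by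
  rw [gramBlock_apply, Nat.succ_le_iff, one_lt_card] at hab
  obtain ⟨k, hk, k', hk', hkk'⟩ := hab
  simp only [mem_filter, mem_univ, true_and] at hk hk'
  exact egirth_le_four (u := inl (i, a)) (v := inl (j, b)) (x := inr (k, σ i k a))
    (y := inr (k', σ i k' a)) (by simp [hij]) (by simp [hkk']) (by simp)
    (by simp [hk]) (by simp [hk']) (by simp)

end Hperm

theorem stmt17 {N nc nv : ℕ} (σ : Fin nc → Fin nv → Equiv.Perm (Fin N))
    (m : ℕ) (hm : 2 ≤ m)
    (h : ((2 * m : ℕ) : ℕ∞) < (tanner (Hperm σ)).egirth) :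
    ∀ i j : Fin nc, i < j →
      (m : ℕ∞) < matGirth (∑ k, permMatrix (σ i k) * (permMatrix (σ j k))ᵀ) := by
  intro i j hij
  change (m : ℕ∞) < matGirth (gramBlock σ i j)
  rw [matGirth]
  split_ifs with hmultiple
  · obtain ⟨a, b, hab⟩ := hmultiple
    have h4 := h.trans_le (egirth_tanner_Hperm_le_four σ hij.ne hab)
    norm_cast at h4
    omega
  · have hsub := (subdivision_tanner_gramBlock_isContained σ hij.ne).egirth_le.trans
      egirth_subdivision_le
    by_contra! hle
    exact (h.trans_le hsub).not_ge (by push_cast; gcongr)
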